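/- For all f, g ∈ L¹(ℝ), the Hartley convolution satisfies ‖f ∗_{H₁} g‖_{L¹(ℝ)} ≤ √(2/π) ‖f‖_{L¹(ℝ)} ‖g‖_{L¹(ℝ)}. -/

import Mathlib

open MeasureTheory Real Complex Filter Topology

noncomputable def Hconv (f g : ℝ → ℂ) (x : ℝ) : ℂ :=
  (1 / (2 * Real.sqrt (2 * Real.pi))) *
    ∫ y : ℝ, f y * (g (x + y) + g (x - y) + g (-x + y) - g (-x - y))

open scoped ENNReal

/-! Bound the integrand of the Hartley convolution by `‖f y‖` times the sum of the four values
`‖g (±x ± y)‖`. By Tonelli and the invariance of Lebesgue measure under `x ↦ ±x ± y`, each of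
the four terms integrates to `‖f‖₁ ‖g‖₁`, so `‖f ∗_{H₁} g‖₁ ≤ 4 / (2 √(2π)) ‖f‖₁ ‖g‖₁`, and
`4 / (2 √(2π)) = √(2/π)`. Working with `ℝ≥0∞`-valued integrals avoids any measurability or
integrability argument for `f ∗_{H₁} g` itself. -/

section HartleyKernelBound

variable {E : Type*} [AddCommGroup E] [MeasurableSpace E] [MeasurableAdd₂ E] [MeasurableNeg E]
  {μ : Measure E} [μ.IsAddLeftInvariant]

def hartleyKernelBound (G : E → ℝ≥0∞) (x y : E) : ℝ≥0∞ :=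
  G (x + y) + G (x - y) + G (-x + y) + G (-x - y)

theorem aemeasurable_hartleyKernelBound_left [μ.IsNegInvariant] {G : E → ℝ≥0∞}
    (hG : AEMeasurable G μ) (y : E) : AEMeasurable (hartleyKernelBound G · y) μ := by
  have hneg := (Measure.measurePreserving_neg μ).quasiMeasurePreserving
  exact (((hG.comp_quasiMeasurePreserving
    (measurePreserving_add_right μ y).quasiMeasurePreserving).add
    (hG.comp_quasiMeasurePreserving (measurePreserving_sub_right μ y).quasiMeasurePreserving)).add
    (hG.comp_quasiMeasurePreserving
      ((measurePreserving_add_right μ y).quasiMeasurePreserving.comp hneg))).add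
    (hG.comp_quasiMeasurePreserving
      ((measurePreserving_sub_right μ y).quasiMeasurePreserving.comp hneg))

theorem lintegral_hartleyKernelBound [μ.IsNegInvariant] {G : E → ℝ≥0∞}
    (hG : AEMeasurable G μ) (y : E) :
    ∫⁻ x, hartleyKernelBound G x y ∂μ = 4 * ∫⁻ x, G x ∂μ := by
  have hneg := (Measure.measurePreserving_neg μ).quasiMeasurePreserving
  have h2 : AEMeasurable (fun x => G (x - y)) μ :=
    hG.comp_quasiMeasurePreserving (measurePreserving_sub_right μ y).quasiMeasurePreserving
  have h3 : AEMeasurable (fun x => G (-x + y)) μ := hG.comp_quasiMeasurePreserving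
    ((measurePreserving_add_right μ y).quasiMeasurePreserving.comp hneg)
  have h4 : AEMeasurable (fun x => G (-x - y)) μ := hG.comp_quasiMeasurePreserving
    ((measurePreserving_sub_right μ y).quasiMeasurePreserving.comp hneg)
  unfold hartleyKernelBound
  rw [lintegral_add_right' _ h4, lintegral_add_right' _ h3, lintegral_add_right' _ h2,
    lintegral_add_right_eq_self, lintegral_sub_right_eq_self,
    lintegral_neg_eq_self (G <| · + y), lintegral_neg_eq_self (G <| · - y),
    lintegral_add_right_eq_self, lintegral_sub_right_eq_self]
  ring

theorem aemeasurable_hartleyKernelBound [SFinite μ] {G : E → ℝ≥0∞} (hG : AEMeasurable G μ) :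
    AEMeasurable (Function.uncurry (hartleyKernelBound G)) (μ.prod μ) := by
  have h4 : Measure.QuasiMeasurePreserving (fun p : E × E => -p.1 - p.2) (μ.prod μ) μ := by
    convert (quasiMeasurePreserving_neg μ).comp (quasiMeasurePreserving_add μ μ) using 1
    ext p
    exact (neg_add' p.1 p.2).symm
  exact (((hG.comp_quasiMeasurePreserving (quasiMeasurePreserving_add μ μ)).add
    (hG.comp_quasiMeasurePreserving (quasiMeasurePreserving_sub μ μ))).add
    (hG.comp_quasiMeasurePreserving (quasiMeasurePreserving_neg_add μ μ))).add
    (hG.comp_quasiMeasurePreserving h4)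

theorem lintegral_lintegral_mul_hartleyKernelBound [SFinite μ] [μ.IsNegInvariant]
    {F G : E → ℝ≥0∞} (hF : AEMeasurable F μ) (hG : AEMeasurable G μ) :
    ∫⁻ x, ∫⁻ y, F y * hartleyKernelBound G x y ∂μ ∂μ =
      4 * (∫⁻ y, F y ∂μ) * ∫⁻ x, G x ∂μ := by
  have hK : AEMeasurable (Function.uncurry fun x y => F y * hartleyKernelBound G x y) (μ.prod μ) :=
    (hF.comp_quasiMeasurePreserving Measure.quasiMeasurePreserving_snd).mul
      (aemeasurable_hartleyKernelBound hG)
  calc ∫⁻ x, ∫⁻ y, F y * hartleyKernelBound G x y ∂μ ∂μ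
      = ∫⁻ y, F y * ∫⁻ x, hartleyKernelBound G x y ∂μ ∂μ := by
        rw [lintegral_lintegral_swap hK]
        exact lintegral_congr fun y =>
          lintegral_const_mul'' _ (aemeasurable_hartleyKernelBound_left hG y)
    _ = 4 * (∫⁻ y, F y ∂μ) * ∫⁻ x, G x ∂μ := by
        simp_rw [lintegral_hartleyKernelBound hG, lintegral_mul_const'' _ hF]
        ring

end HartleyKernelBound

theorem enorm_hconv_le (f g : ℝ → ℂ) (x : ℝ) :
    ‖Hconv f g x‖ₑ ≤ ENNReal.ofReal (1 / (2 * √(2 * π))) *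
      ∫⁻ y, ‖f y‖ₑ * hartleyKernelBound (‖g ·‖ₑ) x y := by
  rw [Hconv, enorm_mul]
  gcongr
  · have hc : ((1 / (2 * √(2 * π)) : ℝ) : ℂ) = 1 / (2 * (√(2 * π) : ℂ)) := by push_cast; rfl
    rw [← hc, ← ofReal_norm, Complex.norm_real, Real.norm_of_nonneg (by positivity)]
  refine (enorm_integral_le_lintegral_enorm _).trans (lintegral_mono fun y => ?_)
  rw [enorm_mul]
  gcongr
  calc ‖g (x + y) + g (x - y) + g (-x + y) - g (-x - y)‖ₑ
      ≤ ‖g (x + y) + g (x - y) + g (-x + y)‖ₑ + ‖g (-x - y)‖ₑ := enorm_sub_le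
    _ ≤ ‖g (x + y)‖ₑ + ‖g (x - y)‖ₑ + ‖g (-x + y)‖ₑ + ‖g (-x - y)‖ₑ := by
        gcongr
        exact enorm_add_le _ _ |>.trans (by gcongr; exact enorm_add_le _ _)

theorem lintegral_enorm_hconv_le {f g : ℝ → ℂ} (hf : AEStronglyMeasurable f)
    (hg : AEStronglyMeasurable g) :
    ∫⁻ x, ‖Hconv f g x‖ₑ ≤ ENNReal.ofReal √(2 / π) * (∫⁻ x, ‖f x‖ₑ) * ∫⁻ x, ‖g x‖ₑ :=
  calc ∫⁻ x, ‖Hconv f g x‖ₑ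
      ≤ ∫⁻ x, ENNReal.ofReal (1 / (2 * √(2 * π))) *
          ∫⁻ y, ‖f y‖ₑ * hartleyKernelBound (‖g ·‖ₑ) x y :=
        lintegral_mono (enorm_hconv_le f g)
    _ = ENNReal.ofReal (1 / (2 * √(2 * π))) *
          (4 * (∫⁻ x, ‖f x‖ₑ) * ∫⁻ x, ‖g x‖ₑ) := by
        rw [lintegral_const_mul' _ _ ENNReal.ofReal_ne_top,
          lintegral_lintegral_mul_hartleyKernelBound hf.enorm hg.enorm]
    _ = ENNReal.ofReal √(2 / π) * (∫⁻ x, ‖f x‖ₑ) * ∫⁻ x, ‖g x‖ₑ := by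
        have hconst : √(2 / π) = 4 * (1 / (2 * √(2 * π))) := by
          rw [Real.sqrt_div' 2 pi_pos.le, Real.sqrt_mul zero_le_two]
          field_simp
          norm_num
        rw [hconst, ENNReal.ofReal_mul (by norm_num), ENNReal.ofReal_ofNat]
        ring

theorem stmt6 (f g : ℝ → ℂ) (hf : Integrable f) (hg : Integrable g) :
    ∫ x : ℝ, ‖Hconv f g x‖ ≤
      Real.sqrt (2 / Real.pi) * (∫ x : ℝ, ‖f x‖) * (∫ x : ℝ, ‖g x‖) := by
  calc ∫ x, ‖Hconv f g x‖
      ≤ (∫⁻ x, ‖Hconv f g x‖ₑ).toReal := by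
        simpa [Real.norm_of_nonneg (integral_nonneg fun x => norm_nonneg (Hconv f g x))]
          using norm_integral_le_lintegral_norm (fun x => ‖Hconv f g x‖)
    _ ≤ (ENNReal.ofReal √(2 / π) * (∫⁻ x, ‖f x‖ₑ) * ∫⁻ x, ‖g x‖ₑ).toReal :=
        ENNReal.toReal_mono
          (ENNReal.mul_ne_top (ENNReal.mul_ne_top ENNReal.ofReal_ne_top hf.2.ne) hg.2.ne)
          (lintegral_enorm_hconv_le hf.1 hg.1)
    _ = √(2 / π) * (∫ x, ‖f x‖) * ∫ x, ‖g x‖ := by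
        rw [← ofReal_integral_norm_eq_lintegral_enorm hf,
          ← ofReal_integral_norm_eq_lintegral_enorm hg, ← ENNReal.ofReal_mul (by positivity),
          ← ENNReal.ofReal_mul (by positivity), ENNReal.toReal_ofReal (by positivity)]
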